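/- Let T be a pre-truss and P a paragon in T. Then P is a completely prime paragon if and only if the quotient pre-truss T/P (the set of ∼_P-classes with the induced heap operation and multiplication) is a domain; explicitly, if and only if for all a,b,c ∈ T such that a·b ∼_P a·c or b·a ∼_P c·a but b ≁_P c, the class of a is an absorber in T/P (i.e. t·a ∼_P a and a·t ∼_P a for all t ∈ T). -/
import Mathlib


/-- A ternary operation is a heap operation if it is associative and satisfies
the Mal'cev identities. -/
def IsHeap {T : Type*} (br : T → T → T → T) : Prop :=
  (∀ a b c d e : T, br (br a b c) d e = br a b (br c d e)) ∧
  (∀ a b : T, br a a b = b) ∧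
  (∀ a b : T, br b a a = b)

/-- A subset `S` is a sub-heap if it is closed under the ternary operation. -/
def IsSubHeap {T : Type*} (br : T → T → T → T) (S : Set T) : Prop :=
  ∀ a ∈ S, ∀ b ∈ S, ∀ c ∈ S, br a b c ∈ S

/-- The sub-heap relation `a ∼_S b` : `[a,b,s] ∈ S` for all `s ∈ S`. -/
def SRel {T : Type*} (br : T → T → T → T) (S : Set T) (a b : T) : Prop :=
  ∀ s ∈ S, br a b s ∈ S

/-- The equivalence class of `a` under the sub-heap relation `∼_S`. -/
def Cls {T : Type*} (br : T → T → T → T) (S : Set T) (a : T) : Set T :=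
  {z | SRel br S z a}

/-- A sub-heap `S` is normal if `[[a,e,s],a,e] ∈ S` for all `a` and all `e, s ∈ S`. -/
def IsNormalSubHeap {T : Type*} (br : T → T → T → T) (S : Set T) : Prop :=
  IsSubHeap br S ∧ ∀ a : T, ∀ e ∈ S, ∀ s ∈ S, br (br a e s) a e ∈ S

/-- A sub-heap `S` of a pre-truss is left-closed if `[t·s', t·s, s] ∈ S`. -/
def LeftClosed {T : Type*} [Mul T] (br : T → T → T → T) (S : Set T) : Prop :=
  ∀ s ∈ S, ∀ s' ∈ S, ∀ t : T, br (t * s') (t * s) s ∈ S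

/-- A sub-heap `S` of a pre-truss is right-closed if `[s'·t, s·t, s] ∈ S`. -/
def RightClosed {T : Type*} [Mul T] (br : T → T → T → T) (S : Set T) : Prop :=
  ∀ s ∈ S, ∀ s' ∈ S, ∀ t : T, br (s' * t) (s * t) s ∈ S

/-- A paragon is a non-empty normal sub-heap all of whose `∼_P`-equivalence
classes are closed normal sub-heaps. -/
def IsParagon {T : Type*} [Mul T] (br : T → T → T → T) (P : Set T) : Prop :=
  P.Nonempty ∧ IsNormalSubHeap br P ∧
  ∀ a : T, IsNormalSubHeap br (Cls br P a) ∧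
    LeftClosed br (Cls br P a) ∧ RightClosed br (Cls br P a)

/-- A left ideal: a non-empty normal sub-heap closed under left multiplication. -/
def IsLeftIdeal {T : Type*} [Mul T] (br : T → T → T → T) (I : Set T) : Prop :=
  I.Nonempty ∧ IsNormalSubHeap br I ∧ ∀ t : T, ∀ i ∈ I, t * i ∈ I

/-- A right ideal: a non-empty normal sub-heap closed under right multiplication. -/
def IsRightIdeal {T : Type*} [Mul T] (br : T → T → T → T) (I : Set T) : Prop :=
  I.Nonempty ∧ IsNormalSubHeap br I ∧ ∀ t : T, ∀ i ∈ I, i * t ∈ I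

/-- A (two-sided) ideal. -/
def IsIdeal {T : Type*} [Mul T] (br : T → T → T → T) (I : Set T) : Prop :=
  I.Nonempty ∧ IsNormalSubHeap br I ∧ ∀ t : T, ∀ i ∈ I, t * i ∈ I ∧ i * t ∈ I

/-- For a paragon `P`, `p ∈ P` and `a ∈ T`, the set `P_p^a = {[q,p,a] : q ∈ P}`. -/
def Ppa {T : Type*} (br : T → T → T → T) (P : Set T) (p a : T) : Set T :=
  {x | ∃ q ∈ P, x = br q p a}

/-- A completely prime paragon. -/
def CompletelyPrime {T : Type*} [Mul T] (br : T → T → T → T) (P : Set T) : Prop :=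
  IsParagon br P ∧ ∀ p ∈ P, ∀ a b c : T,
    (br (a * b) (a * c) p ∈ P → IsIdeal br (Ppa br P p a) ∨ br b c p ∈ P) ∧
    (br (b * a) (c * a) p ∈ P → IsIdeal br (Ppa br P p a) ∨ br b c p ∈ P)

section Aux

variable {T : Type*} {br : T → T → T → T} {P : Set T}

lemma srel_of_mem (hH : IsHeap br) (hSub : IsSubHeap br P)
    {x y p : T} (hp : p ∈ P) (h : br x y p ∈ P) : SRel br P x y := by
  intro s hs
  have key : br (br x y p) p s = br x y s := by rw [hH.1, hH.2.1]
  rw [← key]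
  exact hSub _ h _ hp _ hs

lemma srel_refl (hH : IsHeap br) (x : T) : SRel br P x x := by
  intro s hs
  rw [hH.2.1]; exact hs

lemma srel_trans (hH : IsHeap br) {x y z : T}
    (h1 : SRel br P x y) (h2 : SRel br P y z) : SRel br P x z := by
  intro s hs
  have key : br x z s = br x y (br y z s) := by rw [← hH.1, hH.2.2]
  rw [key]
  exact h1 _ (h2 _ hs)

lemma srel_translate (hH : IsHeap br) {u v : T}
    (h : SRel br P u v) (x : T) : SRel br P (br u v x) x := by
  intro s hs
  have key : br (br u v x) x s = br u v s := by rw [hH.1, hH.2.1]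
  rw [key]
  exact h s hs

lemma ppa_eq_cls (hH : IsHeap br) (hSub : IsSubHeap br P)
    {p : T} (hp : p ∈ P) (a : T) : Ppa br P p a = Cls br P a := by
  ext x
  constructor
  · rintro ⟨q, hq, rfl⟩
    intro s hs
    have key : br (br q p a) a s = br q p s := by rw [hH.1, hH.2.1]
    rw [key]
    exact hSub _ hq _ hp _ hs
  · intro h
    refine ⟨br x a p, h p hp, ?_⟩
    rw [hH.1, hH.2.1, hH.2.2]

end Aux

/-- A paragon `P` in a pre-truss `T` is completely prime iff the quotient `T/P`
is a domain: whenever `a·b ∼_P a·c` or `b·a ∼_P c·a` but `b ≁_P c`, the class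
of `a` is an absorber in `T/P`. -/
theorem completelyPrime_iff_quotient_domain {T : Type*} [Mul T]
    (br : T → T → T → T) (hH : IsHeap br)
    (hmul : ∀ a b c : T, a * b * c = a * (b * c))
    (P : Set T) (hP : IsParagon br P) :
    CompletelyPrime br P ↔
      ∀ a b c : T, (SRel br P (a * b) (a * c) ∨ SRel br P (b * a) (c * a)) →
        ¬ SRel br P b c →
        ∀ t : T, SRel br P (t * a) a ∧ SRel br P (a * t) a := by
  obtain ⟨⟨p0, hp0⟩, ⟨hPsub, hPnorm⟩, hCls⟩ := hP
  have mem_cls_self : ∀ a : T, a ∈ Cls br P a := fun a => srel_refl hH a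
  -- The ideal condition on a class is equivalent to the absorber condition.
  have ideal_iff : ∀ a : T, IsIdeal br (Cls br P a) ↔
      ∀ t : T, SRel br P (t * a) a ∧ SRel br P (a * t) a := by
    intro a
    constructor
    · intro hI t
      exact ⟨(hI.2.2 t a (mem_cls_self a)).1, (hI.2.2 t a (mem_cls_self a)).2⟩
    · intro habs
      refine ⟨⟨a, mem_cls_self a⟩, (hCls a).1, fun t i hi => ?_⟩
      constructor
      · -- t * i ∈ Cls a
        have hu : br (t * i) (t * a) a ∈ Cls br P a :=
          (hCls a).2.1 a (mem_cls_self a) i hi t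
        have key : br (br (t * i) (t * a) a) a (t * a) = t * i := by
          rw [hH.1, hH.2.1, hH.2.2]
        have ht : SRel br P (t * i) (t * a) := by
          have := srel_translate hH hu (t * a)
          rwa [key] at this
        exact srel_trans hH ht (habs t).1
      · -- i * t ∈ Cls a
        have hu : br (i * t) (a * t) a ∈ Cls br P a :=
          (hCls a).2.2 a (mem_cls_self a) i hi t
        have key : br (br (i * t) (a * t) a) a (a * t) = i * t := by
          rw [hH.1, hH.2.1, hH.2.2]
        have ht : SRel br P (i * t) (a * t) := by
          have := srel_translate hH hu (a * t)
          rwa [key] at this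
        exact srel_trans hH ht (habs t).2
  constructor
  · rintro ⟨-, hprime⟩ a b c hor hbc t
    have hbc' : br b c p0 ∉ P := fun h => hbc (srel_of_mem hH hPsub hp0 h)
    rcases hor with h | h
    · rcases (hprime p0 hp0 a b c).1 (h p0 hp0) with hI | hmem
      · rw [ppa_eq_cls hH hPsub hp0 a] at hI
        exact (ideal_iff a).1 hI t
      · exact absurd hmem hbc'
    · rcases (hprime p0 hp0 a b c).2 (h p0 hp0) with hI | hmem
      · rw [ppa_eq_cls hH hPsub hp0 a] at hI
        exact (ideal_iff a).1 hI t
      · exact absurd hmem hbc'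
  · intro hdom
    refine ⟨⟨⟨p0, hp0⟩, ⟨hPsub, hPnorm⟩, hCls⟩, fun p hp a b c => ⟨?_, ?_⟩⟩
    · intro h
      by_cases hbc : br b c p ∈ P
      · exact Or.inr hbc
      · left
        have habs := hdom a b c (Or.inl (srel_of_mem hH hPsub hp h))
          (fun hs => hbc (hs p hp))
        rw [ppa_eq_cls hH hPsub hp a]
        exact (ideal_iff a).2 habs
    · intro h
      by_cases hbc : br b c p ∈ P
      · exact Or.inr hbc
      · left
        have habs := hdom a b c (Or.inr (srel_of_mem hH hPsub hp h))
          (fun hs => hbc (hs p hp))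
        rw [ppa_eq_cls hH hPsub hp a]
        exact (ideal_iff a).2 habs
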